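/- arXiv:2108.00058 — 4 statements merged into one kernel-verified Lean document; each statement's English description precedes it below -/
import Mathlib

section
/- The full interruption of any node j equals the sum of islacks along the directed path from the root to j: u_j = Σ_{i ∈ path(0,j)} F_i. -/
/-!
Along the arc into `j` the full interruption grows by `θ̃_j` exactly when the arc is a switch,
and the islack `F_j = θ_j + Σ_k f_{jk} − f_{ij}` equals the same quantity, because
`Σ_k f_{jk} = θ̃_j − θ_j` by the recursion for `θ̃`. At the root both sides are `θ̃_0`.
So `u` and the path sums of `F` satisfy the same recursion down the tree.
-/

open scoped Classical BigOperators

/-- A finite arborescence: every node has a parent, the root is its own parent,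
and every node reaches the root by iterating `parent`.  The arcs of the tree are
the pairs `(parent j, j)` for non-root `j`. -/
structure Arbor (V : Type*) where
  root : V
  parent : V → V
  parent_root : parent root = root
  reaches_root : ∀ v : V, ∃ n : ℕ, parent^[n] v = root

variable {V : Type*}

/-- `T.desc j i` : node `i` belongs to the subtree rooted at `j`
(equivalently, `j` lies on the directed path from the root to `i`). -/
def Arbor.desc (T : Arbor V) (j i : V) : Prop := ∃ n : ℕ, T.parent^[n] i = j

/-- The children of node `i`. -/
noncomputable def Arbor.children [Fintype V] (T : Arbor V) (i : V) : Finset V :=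
  Finset.univ.filter fun j => j ≠ T.root ∧ T.parent j = i

/-- The subtree rooted at `j`, as a finset (the set `V_j`). -/
noncomputable def Arbor.subtree [Fintype V] (T : Arbor V) (j : V) : Finset V :=
  Finset.univ.filter fun i => T.desc j i

/-- The node set of the unique directed path from the root to `j` (the set `path(0,j)`). -/
noncomputable def Arbor.pathSet [Fintype V] (T : Arbor V) (j : V) : Finset V :=
  Finset.univ.filter fun i => T.desc i j

/-- The arcs of the tree, each arc `(parent j, j)` identified with its head `j ≠ root`. -/
noncomputable def Arbor.arcs [Fintype V] (T : Arbor V) : Finset V :=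
  Finset.univ.filter fun j => j ≠ T.root

namespace Arbor

variable (T : Arbor V)

theorem iterate_parent_root (n : ℕ) : T.parent^[n] T.root = T.root :=
  Function.iterate_fixed T.parent_root n

theorem induction {P : V → Prop} (root : P T.root)
    (step : ∀ j, j ≠ T.root → P (T.parent j) → P j) (j : V) : P j := by
  obtain ⟨n, hn⟩ := T.reaches_root j
  induction n generalizing j with
  | zero =>
    obtain rfl : j = T.root := hn
    exact root
  | succ n ih =>
    by_cases hj : j = T.root
    · exact hj ▸ root
    · exact step j hj (ih _ hn)

theorem desc_refl (j : V) : T.desc j j := ⟨0, rfl⟩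

theorem desc_of_desc_parent {i j : V} (h : T.desc i (T.parent j)) : T.desc i j := by
  obtain ⟨n, hn⟩ := h
  exact ⟨n + 1, hn⟩

/-- Acyclicity: on a cycle through `j` the orbit of `j` is periodic, so it could only reach
the fixed point `root` if `j = root`. -/
theorem not_desc_parent {j : V} (hj : j ≠ T.root) : ¬ T.desc j (T.parent j) := by
  rintro ⟨n, hn⟩
  have hcycle : T.parent^[n + 1] j = j := hn
  obtain ⟨m, hm⟩ := T.reaches_root j
  have hback : T.parent^[(n + 1) * m] j = j := by
    rw [Function.iterate_mul, Function.iterate_fixed hcycle]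
  have hroot : T.parent^[(n + 1) * m] j = T.root := by
    rw [Nat.add_mul, Nat.one_mul, Function.iterate_add_apply, hm, iterate_parent_root]
  exact hj (hback.symm.trans hroot)

variable [Fintype V]

theorem mem_pathSet {i j : V} : i ∈ T.pathSet j ↔ T.desc i j := by
  simp [pathSet]

theorem pathSet_root : T.pathSet T.root = {T.root} := by
  ext i
  simp only [mem_pathSet, Finset.mem_singleton, desc, iterate_parent_root]
  exact ⟨fun ⟨_, hn⟩ => hn.symm, fun hi => ⟨0, hi.symm⟩⟩

theorem pathSet_of_ne_root {j : V} (hj : j ≠ T.root) :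
    T.pathSet j = insert j (T.pathSet (T.parent j)) := by
  ext i
  simp only [Finset.mem_insert, mem_pathSet]
  refine ⟨?_, ?_⟩
  · rintro ⟨_ | n, hn⟩
    · exact Or.inl hn.symm
    · exact Or.inr ⟨n, hn⟩
  · rintro (rfl | h)
    · exact T.desc_refl i
    · exact T.desc_of_desc_parent h

theorem sum_pathSet_of_ne_root {M : Type*} [AddCommMonoid M] (g : V → M) {j : V}
    (hj : j ≠ T.root) :
    ∑ i ∈ T.pathSet j, g i = g j + ∑ i ∈ T.pathSet (T.parent j), g i := by
  rw [T.pathSet_of_ne_root hj, Finset.sum_insert (T.mem_pathSet.not.mpr (T.not_desc_parent hj))]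

theorem eq_sum_pathSet_of_increment {M : Type*} [AddCommMonoid M] {u F : V → M}
    (h_root : u T.root = F T.root) (h_step : ∀ j, j ≠ T.root → u j = F j + u (T.parent j))
    (j : V) : u j = ∑ i ∈ T.pathSet j, F i := by
  induction j using T.induction with
  | root => rw [pathSet_root, Finset.sum_singleton, h_root]
  | step j hj ih => rw [T.sum_pathSet_of_ne_root F hj, ← ih, h_step j hj]

end Arbor

theorem full_interruption_eq_path_islack_sum_general [Fintype V] (T : Arbor V) (As : V → Prop)
    (θ θt f u F : V → ℝ)
    (hrec : ∀ i, θt i = θ i + ∑ j ∈ (T.children i).filter (fun j => ¬ As j), θt j)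
    (hf : ∀ j, f j = if As j then 0 else θt j)
    (hu0 : u T.root = θt T.root)
    (hu : ∀ j, j ≠ T.root → u j = u (T.parent j) + (if As j then θt j else 0))
    (hFroot : F T.root = θ T.root + ∑ k ∈ T.children T.root, f k)
    (hF : ∀ j, j ≠ T.root → F j = θ j + (∑ k ∈ T.children j, f k) - f j) :
    ∀ j, u j = ∑ i ∈ T.pathSet j, F i := by
  have hflow : ∀ i, ∑ k ∈ T.children i, f k = θt i - θ i := by
    intro i
    rw [hrec i, add_sub_cancel_left, Finset.sum_filter]
    exact Finset.sum_congr rfl fun k _ => by rw [hf, ite_not]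
  refine T.eq_sum_pathSet_of_increment ?_ fun j hj => ?_
  · rw [hu0, hFroot, hflow, add_sub_cancel]
  · rw [hu j hj, hF j hj, hflow, hf]
    split_ifs <;> ring

/-- the full interruption of any node equals the sum of islacks along the
directed path from the root to that node. -/
theorem full_interruption_eq_path_islack_sum [Fintype V] (T : Arbor V) (As : V → Prop)
    (θ θt f u F : V → ℝ) (hθ : ∀ i, 0 ≤ θ i)
    (hrec : ∀ i, θt i = θ i + ∑ j ∈ (T.children i).filter (fun j => ¬ As j), θt j)
    (hf : ∀ j, f j = if As j then 0 else θt j)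
    (hu0 : u T.root = θt T.root)
    (hu : ∀ j, j ≠ T.root → u j = u (T.parent j) + (if As j then θt j else 0))
    (hFroot : F T.root = θ T.root + ∑ k ∈ T.children T.root, f k)
    (hF : ∀ j, j ≠ T.root → F j = θ j + (∑ k ∈ T.children j, f k) - f j) :
    ∀ j, u j = ∑ i ∈ T.pathSet j, F i :=
  full_interruption_eq_path_islack_sum_general T As θ θt f u F hrec hf hu0 hu hFroot hF
end

section
/- Lower bound on ENS: for any set of switch arcs A_s, the energy not supplied satisfies ENS ≥ Σ_{i ∈ V} l̃_i θ_i, with equality when A_s = A (every arc contains a switch). -/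
open scoped Classical BigOperators

variable {V : Type*}

-- depth
noncomputable def Arbor.depth (T : Arbor V) (v : V) : ℕ := Nat.find (T.reaches_root v)

lemma Arbor.depth_spec (T : Arbor V) (v : V) : T.parent^[T.depth v] v = T.root :=
  Nat.find_spec (T.reaches_root v)

lemma Arbor.iterate_root (T : Arbor V) (n : ℕ) : T.parent^[n] T.root = T.root :=
  Function.iterate_fixed T.parent_root n

lemma Arbor.depth_root (T : Arbor V) : T.depth T.root = 0 :=
  Nat.eq_zero_of_le_zero (Nat.find_min' _ (by simp))

lemma Arbor.eq_root_of_depth_zero (T : Arbor V) {v : V} (h : T.depth v = 0) : v = T.root := by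
  have := T.depth_spec v; rwa [h] at this

lemma Arbor.depth_pos (T : Arbor V) {j : V} (hj : j ≠ T.root) : 1 ≤ T.depth j := by
  rcases Nat.eq_zero_or_pos (T.depth j) with h | h
  · exact absurd (T.eq_root_of_depth_zero h) hj
  · exact h

lemma Arbor.depth_parent (T : Arbor V) {j : V} (hj : j ≠ T.root) :
    T.depth (T.parent j) = T.depth j - 1 := by
  have h1 := T.depth_pos hj
  have hs : T.parent^[T.depth j - 1] (T.parent j) = T.root := by
    rw [← Function.iterate_succ_apply, Nat.succ_eq_add_one, Nat.sub_add_cancel h1]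
    exact T.depth_spec j
  have h2 : T.depth (T.parent j) ≤ T.depth j - 1 := Nat.find_min' _ hs
  have h3 : T.depth j ≤ T.depth (T.parent j) + 1 := by
    apply Nat.find_min' _
    rw [Function.iterate_succ_apply]
    exact T.depth_spec (T.parent j)
  omega

lemma Arbor.depth_parent_lt (T : Arbor V) {j : V} (hj : j ≠ T.root) :
    T.depth (T.parent j) < T.depth j := by
  have := T.depth_parent hj; have := T.depth_pos hj; omega

lemma Arbor.depth_parent_le (T : Arbor V) (v : V) : T.depth (T.parent v) ≤ T.depth v := by
  by_cases h : v = T.root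
  · subst h; rw [T.parent_root]
  · exact le_of_lt (T.depth_parent_lt h)

lemma Arbor.depth_iterate_le (T : Arbor V) (k : ℕ) (v : V) :
    T.depth (T.parent^[k] v) ≤ T.depth v := by
  induction k with
  | zero => simp
  | succ n ih =>
    rw [Function.iterate_succ_apply']
    exact le_trans (T.depth_parent_le _) ih

lemma Arbor.not_desc_parent_s7 (T : Arbor V) {j : V} (hj : j ≠ T.root) :
    ¬ T.desc j (T.parent j) := by
  rintro ⟨n, hn⟩
  have h := T.depth_iterate_le n (T.parent j)
  rw [hn] at h
  exact absurd (lt_of_le_of_lt h (T.depth_parent_lt hj)) (lt_irrefl _)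

-- membership lemmas
lemma Arbor.mem_pathSet_s7 [Fintype V] (T : Arbor V) {i j : V} :
    i ∈ T.pathSet j ↔ T.desc i j := by simp [Arbor.pathSet]

lemma Arbor.mem_subtree [Fintype V] (T : Arbor V) {i j : V} :
    i ∈ T.subtree j ↔ T.desc j i := by simp [Arbor.subtree]

lemma Arbor.desc_self (T : Arbor V) (j : V) : T.desc j j := ⟨0, rfl⟩

lemma Arbor.pathSet_root_s7 [Fintype V] (T : Arbor V) : T.pathSet T.root = {T.root} := by
  ext i
  simp only [Arbor.mem_pathSet_s7, Finset.mem_singleton, Arbor.desc]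
  constructor
  · rintro ⟨n, hn⟩; rw [T.iterate_root] at hn; exact hn.symm
  · rintro rfl; exact ⟨0, rfl⟩

lemma Arbor.pathSet_eq [Fintype V] (T : Arbor V) {j : V} (hj : j ≠ T.root) :
    T.pathSet j = insert j (T.pathSet (T.parent j)) := by
  ext i
  simp only [Arbor.mem_pathSet_s7, Finset.mem_insert, Arbor.desc]
  constructor
  · rintro ⟨n, hn⟩
    cases n with
    | zero => exact Or.inl hn.symm
    | succ m => exact Or.inr ⟨m, by rwa [Function.iterate_succ_apply] at hn⟩
  · rintro (rfl | ⟨m, hm⟩)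
    · exact ⟨0, rfl⟩
    · exact ⟨m + 1, by rwa [Function.iterate_succ_apply]⟩

lemma Arbor.mem_children [Fintype V] (T : Arbor V) {i j : V} :
    j ∈ T.children i ↔ j ≠ T.root ∧ T.parent j = i := by simp [Arbor.children]

lemma Arbor.not_mem_pathSet_parent [Fintype V] (T : Arbor V) {j : V} (hj : j ≠ T.root) :
    j ∉ T.pathSet (T.parent j) := by
  rw [Arbor.mem_pathSet_s7]; exact T.not_desc_parent_s7 hj

-- depth bounded by card
lemma Arbor.depth_iterate_eq (T : Arbor V) (v : V) :
    ∀ k, k ≤ T.depth v → T.depth (T.parent^[k] v) = T.depth v - k := by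
  intro k
  induction k with
  | zero => simp
  | succ m ih =>
    intro hm
    have hmd : m ≤ T.depth v := le_of_lt (Nat.lt_of_succ_le hm)
    have h1 := ih hmd
    have hne : T.parent^[m] v ≠ T.root := by
      intro h
      have := T.depth_root
      rw [h] at h1; omega
    rw [Function.iterate_succ_apply', T.depth_parent hne, h1]
    omega

lemma Arbor.depth_lt_card [Fintype V] (T : Arbor V) (v : V) :
    T.depth v < Fintype.card V := by
  have hinj : Function.Injective (fun k : Fin (T.depth v + 1) => T.parent^[(k : ℕ)] v) := by
    intro a b hab
    have ha := T.depth_iterate_eq v a (Nat.lt_succ_iff.mp a.2)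
    have hb := T.depth_iterate_eq v b (Nat.lt_succ_iff.mp b.2)
    simp only at hab
    rw [hab] at ha
    have : (a : ℕ) = b := by omega
    exact Fin.ext this
  have := Fintype.card_le_of_injective _ hinj
  simpa using this

section Main
variable [Fintype V] (T : Arbor V) (As : V → Prop) (θ θt : V → ℝ)
variable (hθ : ∀ i, 0 ≤ θ i)
variable (hrec : ∀ i, θt i = θ i + ∑ j ∈ (T.children i).filter (fun j => ¬ As j), θt j)

include hθ hrec in
lemma thetat_nonneg : ∀ i, 0 ≤ θt i := by
  suffices h : ∀ n i, Fintype.card V ≤ T.depth i + n → 0 ≤ θt i by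
    intro i; exact h (Fintype.card V) i (by omega)
  intro n
  induction n with
  | zero =>
    intro i hi
    exact absurd (T.depth_lt_card i) (by omega)
  | succ m ih =>
    intro i hi
    rw [hrec i]
    have hsum : 0 ≤ ∑ j ∈ (T.children i).filter (fun j => ¬ As j), θt j := by
      apply Finset.sum_nonneg
      intro j hj
      rw [Finset.mem_filter, T.mem_children] at hj
      have hd : T.depth j = T.depth i + 1 := by
        have := T.depth_parent hj.1.1
        have := T.depth_pos hj.1.1
        rw [hj.1.2] at *
        omega
      exact ih j (by omega)
    linarith [hθ i]

include hθ hrec in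
lemma thetat_ge : ∀ i, θ i ≤ θt i := by
  intro i
  rw [hrec i]
  have := Finset.sum_nonneg (fun j (_ : j ∈ (T.children i).filter (fun j => ¬ As j)) =>
    thetat_nonneg T As θ θt hθ hrec j)
  linarith

end Main

/-- lower bound on ENS, with equality when every arc has a switch. -/
theorem ENS_lower_bound [Fintype V] (T : Arbor V) (As : V → Prop)
    (l lt θ θt u : V → ℝ)
    (hl : ∀ i, 0 ≤ l i)
    (hlt : ∀ i, lt i = ∑ j ∈ T.subtree i, l j)
    (hθ : ∀ i, 0 ≤ θ i)
    (hrec : ∀ i, θt i = θ i + ∑ j ∈ (T.children i).filter (fun j => ¬ As j), θt j)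
    (hu0 : u T.root = θt T.root)
    (hu : ∀ j, j ≠ T.root → u j = u (T.parent j) + (if As j then θt j else 0)) :
    (∑ i, lt i * θ i) ≤ (∑ i, l i * u i) ∧
    ((∀ j, j ≠ T.root → As j) → ∑ i, l i * u i = ∑ i, lt i * θ i) := by
  have hnn := thetat_nonneg T As θ θt hθ hrec
  have hge := thetat_ge T As θ θt hθ hrec
  -- sum swap: ∑ i, l i * (∑ j ∈ pathSet i, θ j) = ∑ j, lt j * θ j
  have hswap : ∑ i, l i * (∑ j ∈ T.pathSet i, θ j) = ∑ j, lt j * θ j := by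
    calc ∑ i, l i * (∑ j ∈ T.pathSet i, θ j)
        = ∑ i, ∑ j ∈ T.pathSet i, l i * θ j := by
          simp_rw [Finset.mul_sum]
      _ = ∑ j, ∑ i ∈ T.subtree j, l i * θ j := by
          apply Finset.sum_comm'
          intro i j
          simp [T.mem_pathSet_s7, T.mem_subtree]
      _ = ∑ j, lt j * θ j := by
          apply Finset.sum_congr rfl
          intro j _
          rw [hlt j, Finset.sum_mul]
  -- path sum notation
  set w : V → ℝ := fun i => ∑ j ∈ T.pathSet i, θ j with hw
  -- key inequality: w' i + θt i ≤ u i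
  have key : ∀ i, (∑ j ∈ (T.pathSet i).erase i, θ j) + θt i ≤ u i := by
    suffices h : ∀ n, ∀ i, T.depth i ≤ n → (∑ j ∈ (T.pathSet i).erase i, θ j) + θt i ≤ u i by
      intro i; exact h (T.depth i) i le_rfl
    intro n
    induction n with
    | zero =>
      intro i hi
      have : i = T.root := T.eq_root_of_depth_zero (Nat.eq_zero_of_le_zero hi)
      subst this
      rw [T.pathSet_root_s7]
      simp [hu0]
    | succ m ih =>
      intro i hi
      by_cases hroot : i = T.root
      · subst hroot; rw [T.pathSet_root_s7]; simp [hu0]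
      · set p := T.parent i with hp
        have hdp : T.depth p ≤ m := by
          have h := T.depth_parent_lt hroot; rw [← hp] at h; omega
        have IH := ih p hdp
        have herase : (T.pathSet i).erase i = T.pathSet p := by
          rw [T.pathSet_eq hroot, Finset.erase_insert (T.not_mem_pathSet_parent hroot)]
        have hpmem : p ∈ T.pathSet p := T.mem_pathSet_s7.mpr (T.desc_self p)
        have hsplit : ∑ j ∈ T.pathSet p, θ j
            = θ p + ∑ j ∈ (T.pathSet p).erase p, θ j :=
          (Finset.add_sum_erase _ θ hpmem).symm
        rw [herase, hsplit]
        rw [hu i hroot, ← hp]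
        by_cases hAs : As i
        · rw [if_pos hAs]
          have := hge p
          linarith
        · rw [if_neg hAs]
          -- θt p ≥ θ p + θt i
          have hchild : i ∈ (T.children p).filter (fun j => ¬ As j) := by
            rw [Finset.mem_filter, T.mem_children]
            exact ⟨⟨hroot, rfl⟩, hAs⟩
          have hle : θt i ≤ ∑ j ∈ (T.children p).filter (fun j => ¬ As j), θt j :=
            Finset.single_le_sum (fun j _ => hnn j) hchild
          have hθtp : θ p + θt i ≤ θt p := by rw [hrec p]; linarith
          linarith
  have hwle : ∀ i, w i ≤ u i := by
    intro i
    have himem : i ∈ T.pathSet i := T.mem_pathSet_s7.mpr (T.desc_self i)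
    have : w i = θ i + ∑ j ∈ (T.pathSet i).erase i, θ j := (Finset.add_sum_erase _ θ himem).symm
    rw [this]
    have := key i
    have := hge i
    linarith
  constructor
  · rw [← hswap]
    apply Finset.sum_le_sum
    intro i _
    exact mul_le_mul_of_nonneg_left (hwle i) (hl i)
  · intro hall
    -- θt = θ
    have hθt : ∀ i, θt i = θ i := by
      intro i
      rw [hrec i]
      have : (T.children i).filter (fun j => ¬ As j) = ∅ := by
        apply Finset.filter_eq_empty_iff.mpr
        intro j hj
        rw [T.mem_children] at hj
        simpa using hall j hj.1
      rw [this]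
      simp
    -- u i = w i
    have hueq : ∀ i, u i = w i := by
      suffices h : ∀ n, ∀ i, T.depth i ≤ n → u i = w i by
        intro i; exact h (T.depth i) i le_rfl
      intro n
      induction n with
      | zero =>
        intro i hi
        have : i = T.root := T.eq_root_of_depth_zero (Nat.eq_zero_of_le_zero hi)
        subst this
        rw [hu0, hθt]
        simp [hw, T.pathSet_root_s7]
      | succ m ih =>
        intro i hi
        by_cases hroot : i = T.root
        · subst hroot
          rw [hu0, hθt]
          simp [hw, T.pathSet_root_s7]
        · have hdp : T.depth (T.parent i) ≤ m := by
            have := T.depth_parent_lt hroot; omega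
          rw [hu i hroot, if_pos (hall i hroot), ih _ hdp, hθt]
          simp only [hw]
          rw [T.pathSet_eq hroot,
            Finset.sum_insert (T.not_mem_pathSet_parent hroot)]
          ring
    rw [← hswap]
    apply Finset.sum_congr rfl
    intro i _
    rw [hueq i]
end

section
/- Monotonicity of full interruptions in the switch set: if A_s ⊆ A_s′ then for every node i, u_i(A_s′) ≤ u_i(A_s); i.e., adding switches cannot increase the full interruption of any node. Consequently, ENS(A_s′) ≤ ENS(A_s). -/
open scoped Classical BigOperators

variable {V : Type*}

/-! The downstream interruptions θ̃ only shrink when switches are added, since a child behind a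
new switch stops passing its θ̃ to its parent. The full interruptions are then compared through
the invariant θ̃ᵢ - θ̃'ᵢ ≤ uᵢ - u'ᵢ, pushed down from the root: along an arc (p, j) it reduces
to the fact that j's share of θ̃ₚ - θ̃'ₚ is at most the whole difference, which holds because no
child's share grows. Together with θ̃' ≤ θ̃ the invariant gives u' ≤ u, and the ENS is a
nonnegative combination of the uᵢ. -/

theorem ite_not_le_ite_not {α : Type*} [Preorder α] [Zero α] {p p' : Prop} (hp : p → p')
    {x x' : α} (hx : x' ≤ x) (hx₀ : 0 ≤ x) :
    (if ¬ p' then x' else 0) ≤ if ¬ p then x else 0 := by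
  split_ifs <;> tauto

namespace Arbor

theorem eq_root_of_iterate_eq_self (T : Arbor V) {x : V} {n : ℕ} (hn : 0 < n)
    (h : T.parent^[n] x = x) : x = T.root := by
  obtain ⟨m, hm⟩ := T.reaches_root x
  have hnm : m ≤ n * m := Nat.le_mul_of_pos_left m hn
  calc x = T.parent^[n * m] x := by rw [Function.iterate_mul, Function.iterate_fixed h]
    _ = T.parent^[n * m - m] (T.parent^[m] x) := by
        rw [← Function.iterate_add_apply, Nat.sub_add_cancel hnm]
    _ = T.root := by rw [hm, Function.iterate_fixed T.parent_root]

theorem exists_iterate_of_transGen_child [Fintype V] (T : Arbor V) {i j : V}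
    (h : Relation.TransGen (fun j i => j ∈ T.children i) j i) :
    j ≠ T.root ∧ ∃ n, T.parent^[n + 1] j = i := by
  induction h with
  | single h =>
    obtain ⟨hj, rfl⟩ := Finset.mem_filter.mp h |>.2
    exact ⟨hj, 0, rfl⟩
  | tail _ h ih =>
    obtain ⟨hj, n, hn⟩ := ih
    obtain ⟨-, rfl⟩ := Finset.mem_filter.mp h |>.2
    exact ⟨hj, n + 1, by rw [Function.iterate_succ_apply' _ (n + 1), hn]⟩

theorem wellFounded_children [Fintype V] (T : Arbor V) :
    WellFounded (fun j i => j ∈ T.children i) := by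
  have : Std.Irrefl (Relation.TransGen (fun j i => j ∈ T.children i)) := ⟨fun x hx => by
    obtain ⟨hx, n, hn⟩ := T.exists_iterate_of_transGen_child hx
    exact hx (T.eq_root_of_iterate_eq_self n.succ_pos hn)⟩
  exact (Finite.wellFounded_of_trans_of_irrefl
    (Relation.TransGen fun j i => j ∈ T.children i)).mono fun _ _ h => .single h

theorem induction_from_leaves [Fintype V] (T : Arbor V) {P : V → Prop}
    (step : ∀ i, (∀ j ∈ T.children i, P j) → P i) (i : V) : P i :=
  T.wellFounded_children.induction i step

theorem induction_from_root (T : Arbor V) {P : V → Prop} (root : P T.root)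
    (step : ∀ j, j ≠ T.root → P (T.parent j) → P j) (i : V) : P i := by
  obtain ⟨n, hn⟩ := T.reaches_root i
  induction n generalizing i with
  | zero => rwa [show i = T.root from hn]
  | succ n ih =>
    by_cases hi : i = T.root
    · exact hi ▸ root
    · exact step i hi (ih _ (by rwa [← Function.iterate_succ_apply]))

def IsDownstreamInterruption [Fintype V] (T : Arbor V) (S : V → Prop) (θ θt : V → ℝ) : Prop :=
  ∀ i, θt i = θ i + ∑ j ∈ (T.children i).filter (fun j => ¬ S j), θt j

def IsFullInterruption (T : Arbor V) (S : V → Prop) (θt u : V → ℝ) : Prop :=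
  u T.root = θt T.root ∧ ∀ j, j ≠ T.root → u j = u (T.parent j) + (if S j then θt j else 0)

theorem parent_mem_children [Fintype V] (T : Arbor V) {j : V} (hj : j ≠ T.root) :
    j ∈ T.children (T.parent j) := by
  simp [children, hj]

section Interruptions

variable [Fintype V] {T : Arbor V} {S S' : V → Prop} {θ θt θt' u u' : V → ℝ}

theorem IsDownstreamInterruption.eq_add_sum (h : T.IsDownstreamInterruption S θ θt) (i : V) :
    θt i = θ i + ∑ j ∈ T.children i, if ¬ S j then θt j else 0 := by
  rw [h i, Finset.sum_filter]

theorem IsDownstreamInterruption.nonneg (h : T.IsDownstreamInterruption S θ θt)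
    (hθ : ∀ i, 0 ≤ θ i) (i : V) : 0 ≤ θt i := by
  induction i using T.induction_from_leaves with
  | step i ih =>
    rw [h i]
    exact add_nonneg (hθ i) (Finset.sum_nonneg fun j hj => ih j (Finset.mem_filter.mp hj).1)

theorem IsDownstreamInterruption.antitone (hS : ∀ v, S v → S' v) (hθ : ∀ i, 0 ≤ θ i)
    (h : T.IsDownstreamInterruption S θ θt) (h' : T.IsDownstreamInterruption S' θ θt') (i : V) :
    θt' i ≤ θt i := by
  induction i using T.induction_from_leaves with
  | step i ih =>
    rw [h.eq_add_sum, h'.eq_add_sum]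
    gcongr with j hj
    exact ite_not_le_ite_not (hS _) (ih j hj) (h.nonneg hθ j)

theorem IsDownstreamInterruption.share_sub_le (hS : ∀ v, S v → S' v) (hθ : ∀ i, 0 ≤ θ i)
    (h : T.IsDownstreamInterruption S θ θt) (h' : T.IsDownstreamInterruption S' θ θt')
    {i j : V} (hj : j ∈ T.children i) :
    ((if ¬ S j then θt j else 0) - if ¬ S' j then θt' j else 0) ≤ θt i - θt' i := by
  have hsum : θt i - θt' i =
      ∑ k ∈ T.children i, ((if ¬ S k then θt k else 0) - if ¬ S' k then θt' k else 0) := by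
    rw [Finset.sum_sub_distrib, h.eq_add_sum, h'.eq_add_sum]
    ring
  rw [hsum]
  exact Finset.single_le_sum (fun k _ => sub_nonneg.mpr
    (ite_not_le_ite_not (hS k) (h.antitone hS hθ h' k) (h.nonneg hθ k))) hj

theorem IsFullInterruption.sub_le_sub (hS : ∀ v, S v → S' v) (hθ : ∀ i, 0 ≤ θ i)
    (h : T.IsDownstreamInterruption S θ θt) (h' : T.IsDownstreamInterruption S' θ θt')
    (hu : T.IsFullInterruption S θt u) (hu' : T.IsFullInterruption S' θt' u') (i : V) :
    θt i - θt' i ≤ u i - u' i := by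
  induction i using T.induction_from_root with
  | root => rw [hu.1, hu'.1]
  | step j hj ih =>
    have hshare := h.share_sub_le hS hθ h' (T.parent_mem_children hj)
    rw [hu.2 j hj, hu'.2 j hj]
    split_ifs at hshare ⊢ <;> linarith

theorem IsFullInterruption.antitone (hS : ∀ v, S v → S' v) (hθ : ∀ i, 0 ≤ θ i)
    (h : T.IsDownstreamInterruption S θ θt) (h' : T.IsDownstreamInterruption S' θ θt')
    (hu : T.IsFullInterruption S θt u) (hu' : T.IsFullInterruption S' θt' u') (i : V) :
    u' i ≤ u i := by
  have := hu.sub_le_sub hS hθ h h' hu' i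
  have := h.antitone hS hθ h' i
  linarith

end Interruptions

end Arbor

/-- adding switches cannot increase any full interruption,
and consequently cannot increase the ENS. -/
theorem full_interruption_antitone_in_switches [Fintype V] (T : Arbor V)
    (As As' : V → Prop) (hAs : ∀ v, As v → As' v)
    (l θ θt θt' u u' : V → ℝ)
    (hl : ∀ i, 0 ≤ l i) (hθ : ∀ i, 0 ≤ θ i)
    (hrec : ∀ i, θt i = θ i + ∑ j ∈ (T.children i).filter (fun j => ¬ As j), θt j)
    (hrec' : ∀ i, θt' i = θ i + ∑ j ∈ (T.children i).filter (fun j => ¬ As' j), θt' j)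
    (hu0 : u T.root = θt T.root)
    (hu : ∀ j, j ≠ T.root → u j = u (T.parent j) + (if As j then θt j else 0))
    (hu0' : u' T.root = θt' T.root)
    (hu' : ∀ j, j ≠ T.root → u' j = u' (T.parent j) + (if As' j then θt' j else 0)) :
    (∀ i, u' i ≤ u i) ∧ (∑ i, l i * u' i) ≤ (∑ i, l i * u i) := by
  have hle (i : V) : u' i ≤ u i :=
    Arbor.IsFullInterruption.antitone hAs hθ hrec hrec' ⟨hu0, hu⟩ ⟨hu0', hu'⟩ i
  exact ⟨hle, Finset.sum_le_sum fun i _ => mul_le_mul_of_nonneg_left (hle i) (hl i)⟩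
end

section
/- ENS as a function of islacks: ENS = Σ_{i ∈ V} l̃_i F_i, where F_i are the islacks and l̃_i the downstream loads. -/
open scoped Classical BigOperators

variable {V : Type*}

/-!
The full interruption `u i` accumulates the islack `F j` once for every node `j` on the path
from the root to `i`, so `u i = Σ_{j ∈ path(0,i)} F j`. Exchanging the order of summation in
`Σ_i l i · u i`, node `j` is counted for exactly the loads of its subtree, which gives `l̃ j · F j`.
-/

namespace Arbor

variable (T : Arbor V)

theorem eq_root_of_iterate_succ_eq_self {j : V} {m : ℕ} (h : T.parent^[m + 1] j = j) :
    j = T.root := by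
  obtain ⟨n, hn⟩ := T.reaches_root j
  have hperiodic : T.parent^[(m + 1) * n] j = j := (Function.IsPeriodicPt.mul_const h n).eq
  calc j = T.parent^[(m + 1) * n] j := hperiodic.symm
    _ = T.parent^[m * n] (T.parent^[n] j) := by rw [add_one_mul, Function.iterate_add_apply]
    _ = T.root := by rw [hn, Function.iterate_fixed T.parent_root]

variable [Fintype V]

theorem mem_subtree_s19 {i j : V} : i ∈ T.subtree j ↔ T.desc j i := by
  simp [subtree]

theorem pathSet_eq_insert {i : V} (h : i ≠ T.root) :
    T.pathSet i = insert i (T.pathSet (T.parent i)) := by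
  ext a
  simp only [Finset.mem_insert, mem_pathSet, desc]
  constructor
  · rintro ⟨_ | k, hk⟩
    · exact Or.inl hk.symm
    · exact Or.inr ⟨k, hk⟩
  · rintro (rfl | ⟨k, hk⟩)
    · exact ⟨0, rfl⟩
    · exact ⟨k + 1, hk⟩

theorem self_notMem_pathSet_parent {i : V} (h : i ≠ T.root) : i ∉ T.pathSet (T.parent i) :=
  fun hmem =>
    let ⟨k, hk⟩ := T.mem_pathSet.1 hmem
    h (T.eq_root_of_iterate_succ_eq_self (m := k) hk)

theorem eq_sum_pathSet_of_eq_add {M : Type*} [AddCommMonoid M] {f g : V → M}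
    (hroot : f T.root = g T.root) (hstep : ∀ j, j ≠ T.root → f j = f (T.parent j) + g j)
    (i : V) : f i = ∑ j ∈ T.pathSet i, g j := by
  obtain ⟨n, hn⟩ := T.reaches_root i
  induction n generalizing i with
  | zero =>
    subst hn
    rw [pathSet_root, Finset.sum_singleton, hroot]
  | succ n ih =>
    by_cases hi : i = T.root
    · subst hi
      rw [pathSet_root, Finset.sum_singleton, hroot]
    · rw [pathSet_eq_insert T hi, Finset.sum_insert (T.self_notMem_pathSet_parent hi),
        hstep i hi, ih (T.parent i) hn, add_comm]

theorem sum_sum_pathSet_comm {M : Type*} [AddCommMonoid M] (f : V → V → M) :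
    ∑ i, ∑ j ∈ T.pathSet i, f i j = ∑ j, ∑ i ∈ T.subtree j, f i j :=
  Finset.sum_comm' fun i j => by simp [mem_pathSet, mem_subtree_s19]

end Arbor

theorem ENS_eq_islack_sum_general [Fintype V] (T : Arbor V) (As : V → Prop)
    (l lt θt u F : V → ℝ)
    (hlt : ∀ i, lt i = ∑ j ∈ T.subtree i, l j)
    (hu0 : u T.root = θt T.root)
    (hu : ∀ j, j ≠ T.root → u j = u (T.parent j) + (if As j then θt j else 0))
    (hFroot : F T.root = θt T.root)
    (hF : ∀ j, j ≠ T.root → F j = if As j then θt j else 0) :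
    ∑ i, l i * u i = ∑ i, lt i * F i := by
  have hu_path : ∀ i, u i = ∑ j ∈ T.pathSet i, F j :=
    T.eq_sum_pathSet_of_eq_add (hu0.trans hFroot.symm) fun j hj => by rw [hu j hj, hF j hj]
  simp only [hu_path, hlt, Finset.mul_sum, Finset.sum_mul]
  exact T.sum_sum_pathSet_comm fun i j => l i * F j

/-- ENS as a function of islacks: `ENS = Σ_i l̃_i F_i`. -/
theorem ENS_eq_islack_sum [Fintype V] (T : Arbor V) (As : V → Prop)
    (l lt θ θt u F : V → ℝ)
    (hl : ∀ i, 0 ≤ l i)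
    (hlt : ∀ i, lt i = ∑ j ∈ T.subtree i, l j)
    (hθ : ∀ i, 0 ≤ θ i)
    (hrec : ∀ i, θt i = θ i + ∑ j ∈ (T.children i).filter (fun j => ¬ As j), θt j)
    (hu0 : u T.root = θt T.root)
    (hu : ∀ j, j ≠ T.root → u j = u (T.parent j) + (if As j then θt j else 0))
    (hFroot : F T.root = θt T.root)
    (hF : ∀ j, j ≠ T.root → F j = if As j then θt j else 0) :
    ∑ i, l i * u i = ∑ i, lt i * F i :=
  ENS_eq_islack_sum_general T As l lt θt u F hlt hu0 hu hFroot hF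
end
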